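/- Let n ≥ 1, let A, B : Fin n → Fin n → ℝ have all entries in [0.9, 1.1], let k ∈ Fin n and δ ≥ 0, and let G₁ be the associated (n+1)×(n+1) bimatrix game. Then every Nash equilibrium (x, y) of G₁ satisfies x(0) = 0 and y(0) = 0, and the restrictions x', y' of x and y to the last n strategies (x'(i) = x(i+1), y'(j) = y(j+1)) form a Nash equilibrium of the n×n game with payoff matrices (A, B). -/

import Mathlib

open Finset in
/-- Expected payoff Σ_{i,j} x(i)·M(i,j)·y(j) of the game matrix M under mixed
strategies x (row) and y (column). -/
def payoff {m : ℕ} (M : Fin m → Fin m → ℝ) (x y : Fin m → ℝ) : ℝ :=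
  ∑ i, ∑ j, x i * M i j * y j

/-- (x,y) is a Nash equilibrium of the bimatrix game with row payoff matrix R and
column payoff matrix C. -/
def NashEq {m : ℕ} (R C : Fin m → Fin m → ℝ) (x y : Fin m → ℝ) : Prop :=
  x ∈ stdSimplex ℝ (Fin m) ∧ y ∈ stdSimplex ℝ (Fin m) ∧
  (∀ x' ∈ stdSimplex ℝ (Fin m), payoff R x' y ≤ payoff R x y) ∧
  (∀ y' ∈ stdSimplex ℝ (Fin m), payoff C x y' ≤ payoff C x y)

/-- Row payoff matrix R₁ of the game G₁: R₁(0,j) = 0, R₁(i+1,0) = −1,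
R₁(i+1,j+1) = A(i,j). -/
def R1 {n : ℕ} (A : Fin n → Fin n → ℝ) (i j : Fin (n + 1)) : ℝ :=
  Fin.cases 0 (fun i' => Fin.cases (-1) (fun j' => A i' j') j) i

/-- Column payoff matrix C₁ of the game G₁: C₁(0,0) = −1, C₁(0,j+1) = 3/4 + δ if j = k
and 3/4 otherwise, C₁(i+1,0) = 3/4, C₁(i+1,j+1) = B(i,j). -/
noncomputable def C1 {n : ℕ} (B : Fin n → Fin n → ℝ) (k : Fin n) (δ : ℝ) (i j : Fin (n + 1)) : ℝ :=
  Fin.cases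
    (Fin.cases (-1) (fun j' => if j' = k then 3 / 4 + δ else 3 / 4) j)
    (fun i' => Fin.cases (3 / 4) (fun j' => B i' j') j) i

/-- Row payoff matrix R₀ of the game G₀: payoff 1 on row 0, payoff 0 elsewhere. -/
noncomputable def R0 {n : ℕ} (i _j : Fin (n + 1)) : ℝ := if i = 0 then 1 else 0

/-- Column payoff matrix C₀ of the game G₀: payoff 1 on column 0, payoff 0 elsewhere. -/
noncomputable def C0 {n : ℕ} (_i j : Fin (n + 1)) : ℝ := if j = 0 then 1 else 0

/-!
A pure strategy that earns strictly less than another one against every pure strategy the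
opponent plays with positive probability is never used in a Nash equilibrium. In `G₁`, column
`k + 1` beats column `0` against every row (`3/4 + δ > -1` and `B i k > 3/4`), so `y 0 = 0`;
once column `0` is gone, row `k + 1` (payoffs `A k j > 0`) beats row `0` (payoff `0`), so
`x 0 = 0`. With both `0`-th strategies unused, payoffs and deviations of `G₁` are exactly
those of `(A, B)`.
-/

open Finset Matrix

section StdSimplex

variable {ι : Type*} [Fintype ι]

theorem dotProduct_lt_dotProduct_of_mem_stdSimplex {w f g : ι → ℝ} (hw : w ∈ stdSimplex ℝ ι)
    (h : ∀ i, 0 < w i → f i < g i) : f ⬝ᵥ w < g ⬝ᵥ w := by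
  obtain ⟨i₀, -, hi₀⟩ : ∃ i ∈ univ, (0 : ι → ℝ) i < w i :=
    exists_lt_of_sum_lt (by simp [hw.2])
  refine sum_lt_sum (fun i _ => ?_) ⟨i₀, mem_univ _, mul_lt_mul_of_pos_right (h i₀ hi₀) hi₀⟩
  rcases (hw.1 i).eq_or_lt with hi | hi
  · simp [← hi]
  · exact mul_le_mul_of_nonneg_right (h i hi).le hi.le

theorem eq_zero_of_isMaxOn_dotProduct_of_lt {v w : ι → ℝ} (hw : w ∈ stdSimplex ℝ ι)
    (hmax : IsMaxOn (v ⬝ᵥ ·) (stdSimplex ℝ ι) w) {j j' : ι} (hlt : v j < v j') : w j = 0 := by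
  classical
  have : Nonempty ι := ⟨j⟩
  obtain ⟨m, hm⟩ := Finite.exists_max v
  have hvm : v m ≤ v ⬝ᵥ w := by
    simpa [dotProduct_single] using isMaxOn_iff.1 hmax _ (single_mem_stdSimplex ℝ m)
  have hloss : w j * (v m - v j) ≤ ∑ i, w i * (v m - v i) :=
    single_le_sum (fun i _ => mul_nonneg (hw.1 i) (sub_nonneg.2 (hm i))) (mem_univ j)
  have hsum : ∑ i, w i * (v m - v i) = v m - v ⬝ᵥ w := by
    rw [dotProduct_comm, dotProduct]
    simp only [mul_sub, sum_sub_distrib, ← sum_mul, hw.2, one_mul]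
  nlinarith [hw.1 j, hm j']

theorem tail_mem_stdSimplex {n : ℕ} {x : Fin (n + 1) → ℝ} (hx : x ∈ stdSimplex ℝ (Fin (n + 1)))
    (h0 : x 0 = 0) : Fin.tail x ∈ stdSimplex ℝ (Fin n) :=
  ⟨fun i => hx.1 i.succ, by simpa [Fin.sum_univ_succ, h0, Fin.tail] using hx.2⟩

theorem cons_zero_mem_stdSimplex {n : ℕ} {x : Fin n → ℝ} (hx : x ∈ stdSimplex ℝ (Fin n)) :
    (Fin.cons 0 x : Fin (n + 1) → ℝ) ∈ stdSimplex ℝ (Fin (n + 1)) :=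
  ⟨Fin.cases le_rfl hx.1, by simpa [Fin.sum_univ_succ] using hx.2⟩

end StdSimplex

section Game

variable {m : ℕ} {R C : Fin m → Fin m → ℝ} {x y : Fin m → ℝ}

theorem payoff_eq_dotProduct_mulVec (M : Fin m → Fin m → ℝ) (x y : Fin m → ℝ) :
    payoff M x y = x ⬝ᵥ (of M *ᵥ y) := by
  simp only [payoff, dotProduct, mulVec, of_apply, mul_sum, mul_assoc]

theorem NashEq.eq_zero_of_row_dominated (h : NashEq R C x y) {i i' : Fin m}
    (hdom : ∀ j, 0 < y j → R i j < R i' j) : x i = 0 :=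
  eq_zero_of_isMaxOn_dotProduct_of_lt (v := of R *ᵥ y) h.1
    (isMaxOn_iff.2 fun x' hx' => by
      simpa only [payoff_eq_dotProduct_mulVec, dotProduct_comm (of R *ᵥ y)] using h.2.2.1 x' hx')
    (dotProduct_lt_dotProduct_of_mem_stdSimplex h.2.1 hdom)

theorem NashEq.eq_zero_of_col_dominated (h : NashEq R C x y) {j j' : Fin m}
    (hdom : ∀ i, 0 < x i → C i j < C i j') : y j = 0 :=
  eq_zero_of_isMaxOn_dotProduct_of_lt (v := x ᵥ* of C) h.2.1
    (isMaxOn_iff.2 fun y' hy' => by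
      simpa only [payoff_eq_dotProduct_mulVec, dotProduct_mulVec] using h.2.2.2 y' hy')
    (by simpa only [vecMul, of_apply, dotProduct_comm x] using
      dotProduct_lt_dotProduct_of_mem_stdSimplex h.1 hdom)

theorem payoff_eq_payoff_tail {n : ℕ} (M : Fin (n + 1) → Fin (n + 1) → ℝ)
    {u v : Fin (n + 1) → ℝ} (hu : u 0 = 0) (hv : v 0 = 0) :
    payoff M u v = payoff (fun i j => M i.succ j.succ) (Fin.tail u) (Fin.tail v) := by
  simp [payoff, Fin.sum_univ_succ, hu, hv, Fin.tail]

theorem NashEq.tail {n : ℕ} {R C : Fin (n + 1) → Fin (n + 1) → ℝ} {x y : Fin (n + 1) → ℝ}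
    (h : NashEq R C x y) (hx : x 0 = 0) (hy : y 0 = 0) :
    NashEq (fun i j => R i.succ j.succ) (fun i j => C i.succ j.succ) (Fin.tail x)
      (Fin.tail y) := by
  obtain ⟨hxS, hyS, hrow, hcol⟩ := h
  refine ⟨tail_mem_stdSimplex hxS hx, tail_mem_stdSimplex hyS hy, fun x' hx' => ?_,
    fun y' hy' => ?_⟩
  · simpa [payoff_eq_payoff_tail R hx hy, payoff_eq_payoff_tail R (Fin.cons_zero 0 x') hy]
      using hrow _ (cons_zero_mem_stdSimplex hx')
  · simpa [payoff_eq_payoff_tail C hx hy, payoff_eq_payoff_tail C hx (Fin.cons_zero 0 y')]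
      using hcol _ (cons_zero_mem_stdSimplex hy')

end Game

section G1

variable {n : ℕ}

@[simp]
theorem R1_succ_succ (A : Fin n → Fin n → ℝ) (i j : Fin n) : R1 A i.succ j.succ = A i j := rfl

@[simp]
theorem C1_succ_succ (B : Fin n → Fin n → ℝ) (k : Fin n) (δ : ℝ) (i j : Fin n) :
    C1 B k δ i.succ j.succ = B i j := rfl

theorem C1_zero_lt_C1_succ {B : Fin n → Fin n → ℝ} {k : Fin n} {δ : ℝ}
    (hB : ∀ i, 3 / 4 < B i k) (hδ : 0 ≤ δ) (i : Fin (n + 1)) :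
    C1 B k δ i 0 < C1 B k δ i k.succ := by
  cases i using Fin.cases with
  | zero =>
    simp only [C1, Fin.cases_zero, Fin.cases_succ, ↓reduceIte]
    linarith
  | succ i => simpa [C1] using hB i

theorem R1_zero_lt_R1_succ_succ {A : Fin n → Fin n → ℝ} {i j : Fin n} (h : 0 < A i j) :
    R1 A 0 j.succ < R1 A i.succ j.succ := by
  simpa [R1] using h

end G1

theorem nashEq_G1 (n : ℕ) (A B : Fin n → Fin n → ℝ)
    (hA : ∀ i j, A i j ∈ Set.Icc (0.9 : ℝ) 1.1)
    (hB : ∀ i j, B i j ∈ Set.Icc (0.9 : ℝ) 1.1)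
    (k : Fin n) (δ : ℝ) (hδ : 0 ≤ δ)
    (x y : Fin (n + 1) → ℝ)
    (hNE : NashEq (R1 A) (C1 B k δ) x y) :
    x 0 = 0 ∧ y 0 = 0 ∧
      NashEq A B (fun i : Fin n => x i.succ) (fun j : Fin n => y j.succ) := by
  have hy0 : y 0 = 0 := hNE.eq_zero_of_col_dominated fun i _ =>
    C1_zero_lt_C1_succ (fun i => by linarith [(hB i k).1]) hδ i
  have hx0 : x 0 = 0 := hNE.eq_zero_of_row_dominated (i' := k.succ) fun j hj => by
    cases j using Fin.cases with
    | zero => exact absurd hy0 hj.ne'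
    | succ j => exact R1_zero_lt_R1_succ_succ (by linarith [(hA k j).1])
  exact ⟨hx0, hy0, hNE.tail hx0 hy0⟩
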